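/- arXiv:2306.00541 — 5 statements merged into one kernel-verified Lean document; each statement's English description precedes it below -/
import Mathlib

section
/- Let f : ℝ^p → ℝ admit a functional decomposition f(x) = Σ_{W ⊆ {1,…,p}} g_W(x), where each component g_W(x) depends only on the coordinates of x in W (i.e., if x and y agree on all coordinates in W then g_W(x) = g_W(y)). Fix j ∈ {1,…,p}, a point x ∈ ℝ^p, and a probability measure μ_j on ℝ such that for every W the map t ↦ g_W(x with its j-th coordinate replaced by t) is μ_j-integrable. Then the mean-centered individual conditional expectation value f(x) − ∫ f(x with j-th coordinate replaced by t) dμ_j(t) equals Σ_{W ⊆ {1,…,p}, j ∈ W} [ g_W(x) − ∫ g_W(x with j-th coordinate replaced by t) dμ_j(t) ]; in particular, all components g_W with j ∉ W cancel out of the mean-centered ICE curve. -/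
open MeasureTheory Finset

/-- If `f` admits a functional decomposition into components `g W` each depending only on
the coordinates in `W`, then the mean-centered ICE value of feature `j` at observation `x`
(centering over the distribution `μj` of feature `j`) equals the sum of the centered
components `g W` over those `W` containing `j`: all components not involving `j` cancel. -/
theorem stmt_1 {p : ℕ} (f : (Fin p → ℝ) → ℝ) (g : Finset (Fin p) → (Fin p → ℝ) → ℝ)
    (hdecomp : ∀ x, f x = ∑ W : Finset (Fin p), g W x)
    (hdep : ∀ (W : Finset (Fin p)) (x y : Fin p → ℝ), (∀ i ∈ W, x i = y i) → g W x = g W y)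
    (j : Fin p) (x : Fin p → ℝ) (μj : Measure ℝ) [IsProbabilityMeasure μj]
    (hint : ∀ W : Finset (Fin p), Integrable (fun t => g W (Function.update x j t)) μj) :
    f x - ∫ t, f (Function.update x j t) ∂μj =
      ∑ W ∈ Finset.univ.filter (fun W : Finset (Fin p) => j ∈ W),
        (g W x - ∫ t, g W (Function.update x j t) ∂μj) := by
  have hI : (∫ t, f (Function.update x j t) ∂μj)
      = ∑ W : Finset (Fin p), ∫ t, g W (Function.update x j t) ∂μj := by
    rw [← integral_finset_sum _ (fun W _ => hint W)]
    exact integral_congr_ae (Filter.Eventually.of_forall fun t => hdecomp _)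
  rw [hdecomp x, hI, ← Finset.sum_sub_distrib]
  rw [← Finset.sum_filter_add_sum_filter_not Finset.univ (fun W : Finset (Fin p) => j ∈ W)
    (fun W => g W x - ∫ t, g W (Function.update x j t) ∂μj)]
  have hzero : ∀ W ∈ Finset.univ.filter (fun W : Finset (Fin p) => ¬ j ∈ W),
      g W x - ∫ t, g W (Function.update x j t) ∂μj = 0 := by
    intro W hW
    simp only [Finset.mem_filter] at hW
    have : ∀ t, g W (Function.update x j t) = g W x := by
      intro t
      refine hdep W _ _ fun i hi => Function.update_of_ne (fun h : i = j => hW.2 (h ▸ hi)) _ _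
    simp [this, integral_const, measure_univ]
  rw [Finset.sum_eq_zero hzero, add_zero]
end

section
/- Let f : ℝ^p → ℝ admit a functional decomposition f(x) = Σ_{W ⊆ {1,…,p}} g_W(x), where each component g_W(x) depends only on the coordinates of x in W. Fix j ∈ {1,…,p}, a value x_j ∈ ℝ, a nonempty finite set A of observations x^{(i)} ∈ ℝ^p, and a probability measure μ_j on ℝ with all the maps t ↦ g_W(x^{(i)} with j-th coordinate replaced by t) μ_j-integrable. Define the mean-centered ICE value c_i = f(x^{(i)} with j-th coordinate set to x_j) − ∫ f(x^{(i)} with j-th coordinate set to t) dμ_j(t), and define u_i = Σ_{W: j ∈ W, W ≠ {j}} [ g_W(x^{(i)} with j-th coordinate set to x_j) − ∫ g_W(x^{(i)} with j-th coordinate set to t) dμ_j(t) ]. Then Σ_{i∈A} (c_i − c̄)² = Σ_{i∈A} (u_i − ū)², where c̄ and ū are the empirical means over A; i.e., the PD-based GADGET loss equals the empirical variance of the centered interaction components of feature j. -/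
open MeasureTheory Finset

/-- The PD-based GADGET loss at a grid value `xj` on a subspace `A` — the empirical variance
(sum of squared deviations from the empirical mean) of the mean-centered ICE values `c i` —
equals the empirical variance of the centered interaction components `u i` of feature `j`. -/
theorem stmt_2 {p : ℕ} {ι : Type*} (f : (Fin p → ℝ) → ℝ)
    (g : Finset (Fin p) → (Fin p → ℝ) → ℝ)
    (hdecomp : ∀ x, f x = ∑ W : Finset (Fin p), g W x)
    (hdep : ∀ (W : Finset (Fin p)) (x y : Fin p → ℝ), (∀ i ∈ W, x i = y i) → g W x = g W y)
    (j : Fin p) (xj : ℝ) (A : Finset ι) (hA : A.Nonempty) (obs : ι → Fin p → ℝ)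
    (μj : Measure ℝ) [IsProbabilityMeasure μj]
    (hint : ∀ (i : ι) (W : Finset (Fin p)),
      Integrable (fun t => g W (Function.update (obs i) j t)) μj)
    (c u : ι → ℝ)
    (hc : ∀ i, c i = f (Function.update (obs i) j xj) -
      ∫ t, f (Function.update (obs i) j t) ∂μj)
    (hu : ∀ i, u i = ∑ W ∈ Finset.univ.filter (fun W : Finset (Fin p) => j ∈ W ∧ W ≠ {j}),
      (g W (Function.update (obs i) j xj) - ∫ t, g W (Function.update (obs i) j t) ∂μj)) :
    ∑ i ∈ A, (c i - (∑ i' ∈ A, c i') / (A.card : ℝ)) ^ 2 =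
      ∑ i ∈ A, (u i - (∑ i' ∈ A, u i') / (A.card : ℝ)) ^ 2 := by
  classical
  set κ : ℝ := g {j} (Function.update (fun _ => 0) j xj) -
      ∫ t, g {j} (Function.update (fun _ => 0) j t) ∂μj with hκ
  -- the main-effect term of feature j is the same for all observations
  have hmain : ∀ (i : ι) (s : ℝ),
      g {j} (Function.update (obs i) j s) = g {j} (Function.update (fun _ => 0) j s) := by
    intro i s
    apply hdep
    intro k hk
    simp only [Finset.mem_singleton] at hk
    subst hk
    simp
  have hcu : ∀ i, c i = u i + κ := by
    intro i
    rw [hc, hu, hdecomp]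
    have h1 : (fun t => f (Function.update (obs i) j t)) =
        fun t => ∑ W : Finset (Fin p), g W (Function.update (obs i) j t) :=
      funext fun t => hdecomp _
    rw [h1, integral_finset_sum _ (fun W _ => hint i W), ← Finset.sum_sub_distrib]
    rw [← Finset.sum_filter_add_sum_filter_not Finset.univ
        (fun W : Finset (Fin p) => j ∈ W ∧ W ≠ {j})]
    congr 1
    -- the remaining sum equals κ : only W = {j} contributes
    have hmem : ({j} : Finset (Fin p)) ∈ Finset.univ.filter
        (fun W : Finset (Fin p) => ¬(j ∈ W ∧ W ≠ {j})) := by simp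
    rw [Finset.sum_eq_single_of_mem _ hmem]
    · rw [hmain i xj]
      have : (fun t => g {j} (Function.update (obs i) j t)) =
          fun t => g {j} (Function.update (fun _ => 0) j t) := funext fun t => hmain i t
      rw [this]
    · intro W hW hWne
      simp only [Finset.mem_filter, Finset.mem_univ, true_and, not_and, not_not] at hW
      have hj : j ∉ W := fun hjW => hWne (hW hjW)
      have hconst : ∀ s : ℝ, g W (Function.update (obs i) j s) = g W (obs i) := by
        intro s
        apply hdep
        intro k hk
        have : k ≠ j := fun h => hj (h ▸ hk)
        simp [Function.update_of_ne this]
      have : (fun t => g W (Function.update (obs i) j t)) = fun _ => g W (obs i) :=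
        funext fun t => hconst t
      rw [hconst, this, integral_const]
      simp
  have hn : (A.card : ℝ) ≠ 0 := by
    exact_mod_cast (Finset.card_pos.mpr hA).ne'
  have hsum : ∑ i' ∈ A, c i' = (∑ i' ∈ A, u i') + (A.card : ℝ) * κ := by
    simp [hcu, Finset.sum_add_distrib, mul_comm]
  apply Finset.sum_congr rfl
  intro i _
  rw [hcu, hsum]
  congr 1
  field_simp
  ring
end

section
/- Let f : ℝ^p → ℝ admit a functional decomposition f(x) = Σ_{W ⊆ {1,…,p}} g_W(x), where each component g_W(x) depends only on the coordinates of x in W. Fix j ∈ {1,…,p} and a value x_j ∈ ℝ, let A be a nonempty finite set of observations x^{(i)} ∈ ℝ^p, and assume all maps t ↦ g_W(x^{(i)} with j-th coordinate replaced by t) with j ∈ W are differentiable at x_j. Let d_i be the derivative of t ↦ f(x^{(i)} with j-th coordinate replaced by t) at x_j, and let w_i = Σ_{W: j ∈ W, W ≠ {j}} d/dt[g_W(x^{(i)} with j-th coordinate replaced by t)]|_{t=x_j}. Then Σ_{i∈A} (d_i − d̄)² = Σ_{i∈A} (w_i − w̄)², where d̄ and w̄ are the empirical means over A; i.e., the ALE-based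 GADGET loss at x_j depends only on the derivatives of interaction components between feature j and the other features. -/
open Finset

/-- The ALE-based GADGET loss at `xj` on a subspace `A` — the empirical variance of the
partial derivatives `d i` of the prediction function w.r.t. feature `j` — equals the
empirical variance of the sums `w i` of derivatives of the interaction components between
feature `j` and the other features: the derivative of the main effect is common to all
observations and cancels. -/
theorem stmt_4 {p : ℕ} {ι : Type*} (f : (Fin p → ℝ) → ℝ)
    (g : Finset (Fin p) → (Fin p → ℝ) → ℝ)
    (hdecomp : ∀ x, f x = ∑ W : Finset (Fin p), g W x)
    (hdep : ∀ (W : Finset (Fin p)) (x y : Fin p → ℝ), (∀ i ∈ W, x i = y i) → g W x = g W y)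
    (j : Fin p) (xj : ℝ) (A : Finset ι) (hA : A.Nonempty) (obs : ι → Fin p → ℝ)
    (hdiff : ∀ (i : ι) (W : Finset (Fin p)), j ∈ W →
      DifferentiableAt ℝ (fun t => g W (Function.update (obs i) j t)) xj)
    (d w : ι → ℝ)
    (hd : ∀ i, d i = deriv (fun t => f (Function.update (obs i) j t)) xj)
    (hw : ∀ i, w i = ∑ W ∈ Finset.univ.filter (fun W : Finset (Fin p) => j ∈ W ∧ W ≠ {j}),
      deriv (fun t => g W (Function.update (obs i) j t)) xj) :
    ∑ i ∈ A, (d i - (∑ i' ∈ A, d i') / (A.card : ℝ)) ^ 2 =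
      ∑ i ∈ A, (w i - (∑ i' ∈ A, w i') / (A.card : ℝ)) ^ 2 := by
  classical
  -- For W not containing j, the map t ↦ g W (update (obs i) j t) is constant.
  have hconst : ∀ (i : ι) (W : Finset (Fin p)), j ∉ W →
      (fun t => g W (Function.update (obs i) j t)) = fun _ => g W (obs i) := by
    intro i W hjW
    funext t
    apply hdep
    intro k hk
    exact Function.update_of_ne (by rintro rfl; exact hjW hk) _ _
  -- The main-effect map is the same function for all observations.
  have hmain : ∀ (i i' : ι),
      (fun t => g {j} (Function.update (obs i) j t)) =
        (fun t => g {j} (Function.update (obs i') j t)) := by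
    intro i i'
    funext t
    apply hdep
    intro k hk
    rw [Finset.mem_singleton] at hk
    subst hk
    simp [Function.update_self]
  obtain ⟨i₀, hi₀⟩ := hA
  set c : ℝ := deriv (fun t => g {j} (Function.update (obs i₀) j t)) xj with hc
  -- key: d i = w i + c
  have key : ∀ i, d i = w i + c := by
    intro i
    have hfun : (fun t => f (Function.update (obs i) j t)) =
        fun t => ∑ W : Finset (Fin p), g W (Function.update (obs i) j t) := by
      funext t; exact hdecomp _
    have hdiffall : ∀ W ∈ (Finset.univ : Finset (Finset (Fin p))),
        DifferentiableAt ℝ (fun t => g W (Function.update (obs i) j t)) xj := by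
      intro W _
      by_cases hjW : j ∈ W
      · exact hdiff i W hjW
      · rw [hconst i W hjW]; exact differentiableAt_const _
    have hderiv : d i = ∑ W : Finset (Fin p),
        deriv (fun t => g W (Function.update (obs i) j t)) xj := by
      rw [hd i, hfun]
      have := deriv_fun_sum (u := (Finset.univ : Finset (Finset (Fin p))))
        (A := fun W t => g W (Function.update (obs i) j t)) (x := xj) hdiffall
      simpa using this
    -- split the sum
    have hsplit : (Finset.univ : Finset (Finset (Fin p))) =
        (Finset.univ.filter (fun W : Finset (Fin p) => j ∈ W)) ∪
          (Finset.univ.filter (fun W : Finset (Fin p) => j ∉ W)) := by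
      ext W; simp [em]
    rw [hderiv]
    rw [← Finset.sum_filter_add_sum_filter_not Finset.univ (fun W : Finset (Fin p) => j ∈ W)]
    have hzero : ∑ W ∈ Finset.univ.filter (fun W : Finset (Fin p) => j ∉ W),
        deriv (fun t => g W (Function.update (obs i) j t)) xj = 0 := by
      apply Finset.sum_eq_zero
      intro W hW
      rw [Finset.mem_filter] at hW
      rw [hconst i W hW.2]
      exact deriv_const _ _
    rw [hzero, add_zero]
    -- now split filter (j ∈ ·) into {j} and the rest
    have hfil : Finset.univ.filter (fun W : Finset (Fin p) => j ∈ W) =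
        insert ({j} : Finset (Fin p))
          (Finset.univ.filter (fun W : Finset (Fin p) => j ∈ W ∧ W ≠ {j})) := by
      ext W
      simp only [Finset.mem_filter, Finset.mem_insert, Finset.mem_univ, true_and]
      constructor
      · intro hW
        by_cases h : W = {j}
        · exact Or.inl h
        · exact Or.inr ⟨hW, h⟩
      · rintro (rfl | ⟨hW, _⟩)
        · exact Finset.mem_singleton_self j
        · exact hW
    rw [hfil, Finset.sum_insert (by simp)]
    rw [hw i, hc, hmain i₀ i]
    ring
  -- mean calcuation
  have hcard : (A.card : ℝ) ≠ 0 := by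
    exact_mod_cast Finset.card_ne_zero_of_mem hi₀
  have hmean : (∑ i' ∈ A, d i') / (A.card : ℝ) =
      (∑ i' ∈ A, w i') / (A.card : ℝ) + c := by
    have : ∑ i' ∈ A, d i' = ∑ i' ∈ A, w i' + A.card * c := by
      simp [key, Finset.sum_add_distrib, mul_comm]
    rw [this]
    field_simp
  apply Finset.sum_congr rfl
  intro i _
  rw [key i, hmean]
  ring
end

section
/- Let μ be a probability measure on ℝ^p and let f : ℝ^p → ℝ be additively separable, f(x) = Σ_{k=1}^p h_k(x_k), with each map y ↦ h_k(y_k) μ-integrable. Define the partial dependence function of feature j by f_j^{PD}(t) = ∫ f(y with j-th coordinate replaced by t) dμ(y), and its mean-centered version f_j^{PD,c}(t) = f_j^{PD}(t) − ∫ f_j^{PD}(y_j) dμ(y). Then for every x ∈ ℝ^p, f(x) = ∫ f dμ + Σ_{j=1}^p f_j^{PD,c}(x_j); i.e., an additively separable prediction function is exactly recovered by the constant E_μ[f(X)] plus the sum of its mean-centered one-dimensional partial dependence functions. -/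
open MeasureTheory Finset

/-! For `f x = ∑ k, h k (x k)`, replacing coordinate `j` by `t` changes `f` by `h j t - h j (y j)`,
so the partial dependence function of feature `j` is `t ↦ h j t - E[h j] + E[f]`. Its mean is
`E[f]`, hence the centered version is `h j t - E[h j]`, and summing over `j` gives `f x - E[f]`. -/

noncomputable def partialDependence {ι : Type*} [DecidableEq ι] (μ : Measure (ι → ℝ))
    (f : (ι → ℝ) → ℝ) (j : ι) (t : ℝ) : ℝ :=
  ∫ y, f (Function.update y j t) ∂μ

section Separable

variable {ι : Type*} [Fintype ι] [DecidableEq ι]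

theorem sum_apply_update (h : ι → ℝ → ℝ) (y : ι → ℝ) (j : ι) (t : ℝ) :
    ∑ k, h k (Function.update y j t k) = ∑ k, h k (y k) + (h j t - h j (y j)) := by
  rw [Fintype.sum_eq_add_sum_compl j, Fintype.sum_eq_add_sum_compl j (fun k => h k (y k))]
  have hcompl : ∑ k ∈ {j}ᶜ, h k (Function.update y j t k) = ∑ k ∈ {j}ᶜ, h k (y k) :=
    sum_congr rfl fun k hk => by
      rw [Function.update_of_ne (by simpa using hk)]
  rw [hcompl, Function.update_self]
  ring

variable {μ : Measure (ι → ℝ)} [IsProbabilityMeasure μ] {h : ι → ℝ → ℝ}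

theorem partialDependence_sum_apply (hint : ∀ k, Integrable (fun y => h k (y k)) μ)
    (j : ι) (t : ℝ) :
    partialDependence μ (fun x => ∑ k, h k (x k)) j t =
      (∫ y, ∑ k, h k (y k) ∂μ) + (h j t - ∫ y, h j (y j) ∂μ) := by
  have hsum : Integrable (fun y => ∑ k, h k (y k)) μ := integrable_finsetSum _ fun k _ => hint k
  have hshift : Integrable (fun y => h j t - h j (y j)) μ := (integrable_const _).sub (hint j)
  simp only [partialDependence, sum_apply_update]
  rw [integral_add hsum hshift, integral_sub (integrable_const _) (hint j), integral_const,
    probReal_univ, one_smul]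

theorem integral_partialDependence_sum_apply (hint : ∀ k, Integrable (fun y => h k (y k)) μ)
    (j : ι) :
    ∫ y, partialDependence μ (fun x => ∑ k, h k (x k)) j (y j) ∂μ = ∫ y, ∑ k, h k (y k) ∂μ := by
  have hcentered : Integrable (fun y => h j (y j) - ∫ z, h j (z j) ∂μ) μ :=
    (hint j).sub (integrable_const _)
  simp only [partialDependence_sum_apply hint]
  rw [integral_add (integrable_const _) hcentered,
    integral_sub (hint j) (integrable_const _), integral_const, integral_const, probReal_univ,
    one_smul, one_smul, sub_self, add_zero]

theorem partialDependence_sub_integral_sum_apply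
    (hint : ∀ k, Integrable (fun y => h k (y k)) μ) (j : ι) (t : ℝ) :
    partialDependence μ (fun x => ∑ k, h k (x k)) j t -
        ∫ y, partialDependence μ (fun x => ∑ k, h k (x k)) j (y j) ∂μ =
      h j t - ∫ y, h j (y j) ∂μ := by
  rw [integral_partialDependence_sum_apply hint, partialDependence_sum_apply hint,
    add_sub_cancel_left]

end Separable

/-- An additively separable prediction function `f x = ∑ k, h k (x k)` is exactly recovered
by the constant `E_μ[f]` plus the sum over features `j` of the mean-centered one-dimensional
partial dependence functions evaluated at `x j`. -/
theorem stmt_5 {p : ℕ} (μ : Measure (Fin p → ℝ)) [IsProbabilityMeasure μ]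
    (f : (Fin p → ℝ) → ℝ) (h : Fin p → ℝ → ℝ)
    (hf : ∀ x, f x = ∑ k, h k (x k))
    (hint : ∀ k, Integrable (fun y => h k (y k)) μ)
    (x : Fin p → ℝ) :
    f x = (∫ y, f y ∂μ) +
      ∑ j, ((∫ y, f (Function.update y j (x j)) ∂μ) -
        ∫ y, (∫ z, f (Function.update z j (y j)) ∂μ) ∂μ) := by
  change _ = _ + ∑ j, (partialDependence μ f j (x j) - ∫ y, partialDependence μ f j (y j) ∂μ)
  obtain rfl : f = fun x => ∑ k, h k (x k) := funext hf
  rw [sum_congr rfl fun j _ => partialDependence_sub_integral_sum_apply hint j (x j),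
    sum_sub_distrib, integral_finsetSum _ fun k _ => hint k]
  ring
end

section
/- Let x^{(1)},…,x^{(n)} ∈ ℝ^p be a finite sample and let f : ℝ^p → ℝ satisfy f(x) = φ(x_j) + ψ(x_{−j}) for all x ∈ ℝ^p, for some functions φ : ℝ → ℝ and ψ : ℝ^{p−1} → ℝ (i.e., feature j does not interact with any other feature). Define the empirical PD estimates f̂_j^{PD}(x_j) = (1/n) Σ_{i=1}^n f(x_j, x_{−j}^{(i)}) and f̂_{−j}^{PD}(x_{−j}) = (1/n) Σ_{i=1}^n f(x_j^{(i)}, x_{−j}), the empirical mean-centered versions f̂_j^{PD,c}(x_j^{(i)}) = f̂_j^{PD}(x_j^{(i)}) − (1/n) Σ_{i'=1}^n f̂_j^{PD}(x_j^{(i')}) and analogously f̂_{−j}^{PD,c}, and the centered prediction f̂^c(x^{(i)}) = f(x^{(i)}) − (1/n) Σ_{i'=1}^n f(x^{(i')}). Assume Σ_{i=1}^n (f̂^c(x^{(i)}))² ≠ 0. Then the H-Statistic Ĥ_j² = [ Σ_{i=1}^n ( f̂^c(x^{(i)}) − f̂_j^{PD,c}(x_j^{(i)}) − f̂_{−j}^{PD,c}(x_{−j}^{(i)})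 )² ] / [ Σ_{i=1}^n (f̂^c(x^{(i)}))² ] equals 0. -/
open Finset

/-- If the prediction function decomposes as `f x = φ (x j) + ψ (x_{−j})`, i.e. feature `j`
does not interact with any other feature, then Friedman's H-statistic `Ĥ_j²` — the ratio of
the sum of squared deviations of the centered predictions from the sum of the two empirical
mean-centered partial dependence estimates, divided by the sum of squared centered
predictions — equals `0`. -/
theorem stmt_8 {n p : ℕ} (hn : 0 < n) (X : Fin n → Fin p → ℝ)
    (f : (Fin p → ℝ) → ℝ) (j : Fin p)
    (φ : ℝ → ℝ) (ψ : ({k : Fin p // k ≠ j} → ℝ) → ℝ)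
    (hf : ∀ x, f x = φ (x j) + ψ (fun k => x k.1))
    (PDj : ℝ → ℝ)
    (hPDj : ∀ t, PDj t = (∑ i, f (Function.update (X i) j t)) / (n : ℝ))
    (PDnj : (Fin p → ℝ) → ℝ)
    (hPDnj : ∀ y, PDnj y = (∑ i, f (Function.update y j (X i j))) / (n : ℝ))
    (cj cnj fc : Fin n → ℝ)
    (hcj : ∀ i, cj i = PDj (X i j) - (∑ i', PDj (X i' j)) / (n : ℝ))
    (hcnj : ∀ i, cnj i = PDnj (X i) - (∑ i', PDnj (X i')) / (n : ℝ))
    (hfc : ∀ i, fc i = f (X i) - (∑ i', f (X i')) / (n : ℝ))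
    (hden : ∑ i, (fc i) ^ 2 ≠ 0) :
    (∑ i, (fc i - cj i - cnj i) ^ 2) / (∑ i, (fc i) ^ 2) = 0 := by
  have hupd1 : ∀ i t, f (Function.update (X i) j t) = φ t + ψ (fun k => X i k.1) := by
    intro i t
    rw [hf]
    congr 1
    · rw [Function.update_self]
    · congr 1; funext k; exact Function.update_of_ne k.2 _ _
  have hupd2 : ∀ (y : Fin p → ℝ) i, f (Function.update y j (X i j))
      = φ (X i j) + ψ (fun k => y k.1) := by
    intro y i
    rw [hf]
    congr 1
    · rw [Function.update_self]
    · congr 1; funext k; exact Function.update_of_ne k.2 _ _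
  have hn' : (n : ℝ) ≠ 0 := Nat.cast_ne_zero.mpr hn.ne'
  have key : ∀ i, fc i - cj i - cnj i = 0 := by
    intro i
    rw [hfc, hcj, hcnj]
    simp only [hPDj, hPDnj, hupd1, hupd2, hf, Finset.sum_add_distrib,
      Finset.sum_const, Finset.card_univ, Fintype.card_fin, nsmul_eq_mul,
      add_div, mul_div_cancel_left₀ _ hn']
    field_simp
    ring
  simp only [key]
  simp
end
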